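/- Let i≠j∈[n] with ‖p(i)‖=‖p(j)‖=1 and p(i)≠p(j), where p(i),p(j)∈ℝ². Then, writing d_{ij}=(p(i)-p(j))/‖p(i)-p(j)‖ and p^⊥(k)=(-p_y(k),p_x(k)), one has the 2×2 matrix identity -d_{ij}d_{ij}ᵀ = (1/2)p(i)p(j)ᵀ - (1/2)p^⊥(i)p^⊥(j)ᵀ - (1/2)I. -/

import Mathlib

open Matrix

noncomputable section

def enorm' {d : ℕ} (v : Fin d → ℝ) : ℝ := Real.sqrt (∑ i, v i ^ 2)

def dvec {n d : ℕ} (p : Fin n → Fin d → ℝ) (i j : Fin n) : Fin d → ℝ :=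
  if p i = p j then 0 else (enorm' (p i - p j))⁻¹ • (p i - p j)

abbrev EdgeIdx {n : ℕ} (G : SimpleGraph (Fin n)) [DecidableRel G.Adj] : Type :=
  {e : Fin n × Fin n // e.1 < e.2 ∧ G.Adj e.1 e.2}

def rigidity {n d : ℕ} (G : SimpleGraph (Fin n)) [DecidableRel G.Adj]
    (p : Fin n → Fin d → ℝ) : Matrix (Fin n × Fin d) (EdgeIdx G) ℝ :=
  fun v e => ((if v.1 = e.1.1 then (1:ℝ) else 0) - (if v.1 = e.1.2 then 1 else 0))
      * dvec p e.1.1 e.1.2 v.2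

def stiffness {n d : ℕ} (G : SimpleGraph (Fin n)) [DecidableRel G.Adj]
    (p : Fin n → Fin d → ℝ) : Matrix (Fin n × Fin d) (Fin n × Fin d) ℝ :=
  rigidity G p * (rigidity G p)ᴴ

def lowerStiffness {n d : ℕ} (G : SimpleGraph (Fin n)) [DecidableRel G.Adj]
    (p : Fin n → Fin d → ℝ) : Matrix (EdgeIdx G) (EdgeIdx G) ℝ :=
  (rigidity G p)ᴴ * rigidity G p

theorem stiffness_isHermitian {n d : ℕ} (G : SimpleGraph (Fin n)) [DecidableRel G.Adj]
    (p : Fin n → Fin d → ℝ) : (stiffness G p).IsHermitian :=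
  Matrix.isHermitian_mul_conjTranspose_self _

def eigs {m : Type*} [Fintype m] [DecidableEq m] (A : Matrix m m ℝ)
    (hA : A.IsHermitian) : Multiset ℝ :=
  Finset.univ.val.map hA.eigenvalues

def ascEigs {m : Type*} [Fintype m] [DecidableEq m] (A : Matrix m m ℝ)
    (hA : A.IsHermitian) : List ℝ :=
  (eigs A hA).sort (· ≤ ·)

def nthSmallest {m : Type*} [Fintype m] [DecidableEq m] (A : Matrix m m ℝ)
    (hA : A.IsHermitian) (k : ℕ) : ℝ :=
  (ascEigs A hA).getD (k-1) 0

/-! For unit vectors `‖u - w‖² = 2 (1 - u ⬝ᵥ w)`, so after clearing the normalisation the claim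
becomes `(u - w)(u - w)ᵀ = (1 - u ⬝ᵥ w) (I - u wᵀ + u^⊥ (w^⊥)ᵀ)`, a polynomial identity in the
coordinates that holds modulo `u₀² + u₁² = 1` and `w₀² + w₁² = 1`. -/

theorem enorm'_sq {d : ℕ} (v : Fin d → ℝ) : enorm' v ^ 2 = v ⬝ᵥ v := by
  rw [enorm', Real.sq_sqrt (by positivity)]
  simp only [dotProduct, sq]

theorem dotProduct_self_eq_one_of_enorm'_eq_one {d : ℕ} {v : Fin d → ℝ} (hv : enorm' v = 1) :
    v ⬝ᵥ v = 1 := by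
  rw [← enorm'_sq, hv, one_pow]

theorem enorm'_eq_zero_iff {d : ℕ} {v : Fin d → ℝ} : enorm' v = 0 ↔ v = 0 := by
  rw [← sq_eq_zero_iff, enorm'_sq, dotProduct_self_eq_zero]

theorem enorm'_sub_sq_of_enorm'_eq_one {d : ℕ} {u w : Fin d → ℝ}
    (hu : enorm' u = 1) (hw : enorm' w = 1) :
    enorm' (u - w) ^ 2 = 2 * (1 - u ⬝ᵥ w) := by
  rw [enorm'_sq, sub_dotProduct, dotProduct_sub, dotProduct_sub, dotProduct_comm w u,
    dotProduct_self_eq_one_of_enorm'_eq_one hu, dotProduct_self_eq_one_of_enorm'_eq_one hw]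
  ring

theorem vecMulVec_inv_enorm'_smul_self {d : ℕ} (v : Fin d → ℝ) :
    vecMulVec ((enorm' v)⁻¹ • v) ((enorm' v)⁻¹ • v) = (enorm' v ^ 2)⁻¹ • vecMulVec v v := by
  rw [smul_vecMulVec, vecMulVec_smul, smul_smul, sq, mul_inv]

def perp (v : Fin 2 → ℝ) : Fin 2 → ℝ := fun t => if t = 0 then -(v 1) else v 0

theorem vecMulVec_sub_self_of_unit {u w : Fin 2 → ℝ} (hu : u ⬝ᵥ u = 1) (hw : w ⬝ᵥ w = 1) :
    vecMulVec (u - w) (u - w) =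
      (1 - u ⬝ᵥ w) • (1 - (vecMulVec u w - vecMulVec (perp u) (perp w))) := by
  simp only [dotProduct, Fin.sum_univ_two] at hu hw ⊢
  ext a b
  fin_cases a <;> fin_cases b <;>
    simp only [Fin.zero_eta, Fin.mk_one, Fin.isValue, vecMulVec_apply, Pi.sub_apply, Matrix.smul_apply,
      Matrix.sub_apply, one_apply_eq, one_apply_ne, ne_eq, zero_ne_one, one_ne_zero,
      not_false_eq_true, perp, ↓reduceIte, smul_eq_mul]
  · linear_combination w 1 ^ 2 * hu + (1 - u 0 ^ 2) * hw
  · linear_combination (-(w 0 * w 1)) * hu - u 0 * u 1 * hw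
  · linear_combination (-(w 0 * w 1)) * hu - u 0 * u 1 * hw
  · linear_combination w 0 ^ 2 * hu + (1 - u 1 ^ 2) * hw

/-- For distinct unit vectors `u = p(i)`, `w = p(j)` in `ℝ²`, with
`d_{ij} = (u - w)/‖u - w‖` and `p^⊥ = (-p_y, p_x)`, one has the `2 × 2` matrix
identity `-d_{ij} d_{ij}ᵀ = (1/2) u wᵀ - (1/2) u^⊥ (w^⊥)ᵀ - (1/2) I`. -/
theorem block_identity_circle (u w : Fin 2 → ℝ)
    (hu : enorm' u = 1) (hw : enorm' w = 1) (huw : u ≠ w) :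
    -(Matrix.vecMulVec ((enorm' (u - w))⁻¹ • (u - w)) ((enorm' (u - w))⁻¹ • (u - w))) =
      (1/2 : ℝ) • Matrix.vecMulVec u w -
      (1/2 : ℝ) • Matrix.vecMulVec
          (fun t : Fin 2 => if t = 0 then -(u 1) else u 0)
          (fun t : Fin 2 => if t = 0 then -(w 1) else w 0) -
      (1/2 : ℝ) • (1 : Matrix (Fin 2) (Fin 2) ℝ) := by
  have hgap : 1 - u ⬝ᵥ w ≠ 0 := by
    have hsq := pow_ne_zero 2 (enorm'_eq_zero_iff.not.mpr (sub_ne_zero.mpr huw))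
    rw [enorm'_sub_sq_of_enorm'_eq_one hu hw] at hsq
    exact right_ne_zero_of_mul hsq
  rw [vecMulVec_inv_enorm'_smul_self, enorm'_sub_sq_of_enorm'_eq_one hu hw,
    vecMulVec_sub_self_of_unit (dotProduct_self_eq_one_of_enorm'_eq_one hu)
      (dotProduct_self_eq_one_of_enorm'_eq_one hw), smul_smul, mul_inv, mul_assoc,
    inv_mul_cancel₀ hgap, mul_one]
  unfold perp
  module
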